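/- The HCV system admits an equilibrium (T*, I*, V*) with T* > 0, I* > 0 and V* > 0 if and only if R₀ > 1; when R₀ > 1 this positive equilibrium is unique and satisfies I* = (A/r_I - 1)·T* + T_max·(1 - δ/r_I) and V* = (1-ε)·p·I*/c, where A = (1-θ)·β·p·T_max/c. When R₀ ≤ 1, the only equilibrium with T > 0, I ≥ 0, V ≥ 0 is the uninfected equilibrium (T⁰, 0, 0). -/

import Mathlib

open Set

/-- `(T, I, V)` is an equilibrium point of the HCV system. -/
def hcvEquil (s rT rI dT dI Tmax β p q c η ε : ℝ) (T I V : ℝ) : Prop :=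
  s + rT * T * (1 - (T + I) / Tmax) - dT * T - (1 - η) * β * V * T + q * I = 0 ∧
  rI * I * (1 - (T + I) / Tmax) + (1 - η) * β * V * T - dI * I - q * I = 0 ∧
  (1 - ε) * p * I - c * V = 0

/-- The uninfected equilibrium value `T⁰`. -/
noncomputable def hcvT0 (s rT dT Tmax : ℝ) : ℝ :=
  Tmax / (2 * rT) * (rT - dT + Real.sqrt ((rT - dT) ^ 2 + 4 * rT * s / Tmax))

/-- The basic reproduction number `R₀` (with `1 - θ = (1-ε)(1-η)`). -/
noncomputable def hcvR0 (s rT rI dT dI Tmax β p q c η ε : ℝ) : ℝ :=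
  rI / (dI + q) * (1 - hcvT0 s rT dT Tmax / Tmax)
    + (1 - ε) * (1 - η) * β * p * hcvT0 s rT dT Tmax / (c * (dI + q))

/-!
Off `I = 0`, the equations `I' = 0` and `V' = 0` put `(I, V)` on the line `I = hcvI T`,
`V = (1 - ε) p I / c`, and `T' = 0` then becomes a concave quadratic equation `hcvH T = 0`.
Where that line meets `I = 0`, `hcvH` agrees with the uninfected rate `hcvF`, which is positive
before `T⁰` and negative after it; moreover `hcvH 0 = s + q · hcvI 0`, and `R₀ - 1` has the sign
of `hcvI T⁰`. Comparing signs at these points locates exactly one root of `hcvH` with `T > 0`,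
`hcvI T > 0` when `R₀ > 1`. Conversely, adding the `T'` and `I'` equations shows that every
nonnegative equilibrium satisfies `T + I ≤ T⁰`; if `R₀ ≤ 1` the line then meets `I = 0` at some
`T₁ ≤ T⁰` beyond `T`, and concavity keeps `hcvH` positive on `(0, T₁)`.
-/

def IsConcaveQuadratic (f : ℝ → ℝ) : Prop :=
  ∃ a b k : ℝ, 0 < a ∧ ∀ x, f x = -a * x ^ 2 + b * x + k

namespace IsConcaveQuadratic

variable {f : ℝ → ℝ} {u v w : ℝ}

theorem chord_lt (hf : IsConcaveQuadratic f) (huv : u < v) (hvw : v < w) :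
    (w - v) * f u + (v - u) * f w < (w - u) * f v := by
  obtain ⟨a, b, k, ha, hf⟩ := hf
  have hgap : (w - u) * f v - ((w - v) * f u + (v - u) * f w)
      = a * ((v - u) * (w - v) * (w - u)) := by
    simp only [hf]; ring
  have := sub_pos.2 huv
  have := sub_pos.2 hvw
  have := sub_pos.2 (huv.trans hvw)
  have : 0 < a * ((v - u) * (w - v) * (w - u)) := by positivity
  linarith

theorem pos_of_mem_Ioo (hf : IsConcaveQuadratic f) (hu : 0 < f u) (hw : 0 ≤ f w)
    (hv : v ∈ Ioo u w) : 0 < f v := by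
  have hchord := hf.chord_lt hv.1 hv.2
  have : 0 < (w - v) * f u := mul_pos (sub_pos.2 hv.2) hu
  have : 0 ≤ (v - u) * f w := mul_nonneg (sub_pos.2 hv.1).le hw
  exact pos_of_mul_pos_right (by linarith) (sub_pos.2 (hv.1.trans hv.2)).le

theorem neg_of_lt_of_eq_zero (hf : IsConcaveQuadratic f) (hu : 0 ≤ f u) (hv : f v = 0)
    (huv : u < v) (hvw : v < w) : f w < 0 := by
  have hchord := hf.chord_lt huv hvw
  rw [hv, mul_zero] at hchord
  have : 0 ≤ (w - v) * f u := mul_nonneg (sub_pos.2 hvw).le hu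
  exact neg_of_mul_neg_right (by linarith) (sub_pos.2 huv).le

theorem existsUnique_root_gt (hf : IsConcaveQuadratic f) (hu : 0 < f u) :
    ∃! R, u < R ∧ f R = 0 := by
  refine existsUnique_of_exists_of_unique ?_ fun x y ⟨hx, hfx⟩ ⟨hy, hfy⟩ => ?_
  · obtain ⟨a, b, k, ha, hf⟩ := hf
    -- `4 a f(u) = (b² + 4 a k) - (2 a u - b)²`
    have hdisc : (2 * a * u - b) ^ 2 < b ^ 2 + 4 * a * k := by
      nlinarith [hf u, mul_pos ha hu]
    have hD := Real.sq_sqrt (hdisc.trans_le' (sq_nonneg _)).le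
    have hlt := Real.lt_sqrt_of_sq_lt hdisc
    generalize √(b ^ 2 + 4 * a * k) = D at hD hlt
    refine ⟨(b + D) / (2 * a), ?_, ?_⟩
    · rw [lt_div_iff₀ (by positivity)]
      linarith
    · rw [hf]
      field_simp
      linear_combination -hD
  · by_contra hxy
    rcases lt_or_gt_of_ne hxy with h | h
    · exact (hf.pos_of_mem_Ioo hu hfy.ge ⟨hx, h⟩).ne' hfx
    · exact (hf.pos_of_mem_Ioo hu hfx.ge ⟨hy, h⟩).ne' hfy

end IsConcaveQuadratic

noncomputable section

def hcvA (Tmax β p c η ε : ℝ) : ℝ := (1 - ε) * (1 - η) * β * p * Tmax / c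

def hcvF (s rT dT Tmax x : ℝ) : ℝ := s + rT * x * (1 - x / Tmax) - dT * x

/-- Off `I = 0`, the equations `I' = 0` (divided by `I`) and `V' = 0` force `I = hcvI T`. -/
def hcvI (rI dI Tmax β p q c η ε T : ℝ) : ℝ :=
  (hcvA Tmax β p c η ε / rI - 1) * T + Tmax * (1 - (dI + q) / rI)

def hcvV (rI dI Tmax β p q c η ε T : ℝ) : ℝ := (1 - ε) * p * hcvI rI dI Tmax β p q c η ε T / c

def hcvH (s rT rI dT dI Tmax β p q c η ε T : ℝ) : ℝ :=
  s + rT * T * (1 - (T + hcvI rI dI Tmax β p q c η ε T) / Tmax) - dT * T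
    - (1 - η) * β * hcvV rI dI Tmax β p q c η ε T * T + q * hcvI rI dI Tmax β p q c η ε T

end

section Uninfected

variable {s rT dT Tmax x : ℝ}

local notation "T⁰" => hcvT0 s rT dT Tmax

@[simp]
theorem hcvF_zero : hcvF s rT dT Tmax 0 = s := by simp [hcvF]

theorem isConcaveQuadratic_hcvF (hrT : 0 < rT) (hTmax : 0 < Tmax) :
    IsConcaveQuadratic (hcvF s rT dT Tmax) :=
  ⟨rT / Tmax, rT - dT, s, div_pos hrT hTmax, fun x => by simp only [hcvF]; ring⟩

theorem hcvT0_pos (hs : 0 < s) (hrT : 0 < rT) (hTmax : 0 < Tmax) : 0 < T⁰ := by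
  have hlt : |rT - dT| < √((rT - dT) ^ 2 + 4 * rT * s / Tmax) := by
    rw [← Real.sqrt_sq_eq_abs]
    exact Real.sqrt_lt_sqrt (sq_nonneg _) (lt_add_of_pos_right _ (by positivity))
  have : 0 < rT - dT + √((rT - dT) ^ 2 + 4 * rT * s / Tmax) := by
    linarith [neg_abs_le (rT - dT)]
  unfold hcvT0
  positivity

theorem hcvF_hcvT0 (hs : 0 ≤ s) (hrT : 0 < rT) (hTmax : 0 < Tmax) : hcvF s rT dT Tmax T⁰ = 0 := by
  have hD := Real.sq_sqrt (show 0 ≤ (rT - dT) ^ 2 + 4 * rT * s / Tmax by positivity)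
  unfold hcvF hcvT0
  generalize √((rT - dT) ^ 2 + 4 * rT * s / Tmax) = D at hD ⊢
  field_simp
  field_simp at hD
  linear_combination -hD

theorem hcvF_pos (hs : 0 < s) (hrT : 0 < rT) (hTmax : 0 < Tmax) (hx : 0 < x) (hxT : x < T⁰) :
    0 < hcvF s rT dT Tmax x :=
  (isConcaveQuadratic_hcvF hrT hTmax).pos_of_mem_Ioo (by simpa using hs)
    (hcvF_hcvT0 hs.le hrT hTmax).ge ⟨hx, hxT⟩

theorem hcvF_nonneg (hs : 0 < s) (hrT : 0 < rT) (hTmax : 0 < Tmax) (hx : 0 < x) (hxT : x ≤ T⁰) :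
    0 ≤ hcvF s rT dT Tmax x := by
  rcases hxT.lt_or_eq with hxT | rfl
  · exact (hcvF_pos hs hrT hTmax hx hxT).le
  · exact (hcvF_hcvT0 hs.le hrT hTmax).ge

theorem hcvF_neg (hs : 0 < s) (hrT : 0 < rT) (hTmax : 0 < Tmax) (hxT : T⁰ < x) :
    hcvF s rT dT Tmax x < 0 :=
  (isConcaveQuadratic_hcvF hrT hTmax).neg_of_lt_of_eq_zero (by simpa using hs.le)
    (hcvF_hcvT0 hs.le hrT hTmax) (hcvT0_pos hs hrT hTmax) hxT

theorem le_hcvT0_of_hcvF_nonneg (hs : 0 < s) (hrT : 0 < rT) (hTmax : 0 < Tmax)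
    (hx : 0 ≤ hcvF s rT dT Tmax x) : x ≤ T⁰ :=
  not_lt.1 fun hxT => (hcvF_neg hs hrT hTmax hxT).not_ge hx

theorem eq_hcvT0_of_hcvF_eq_zero (hs : 0 < s) (hrT : 0 < rT) (hTmax : 0 < Tmax) (hx : 0 < x)
    (hFx : hcvF s rT dT Tmax x = 0) : x = T⁰ :=
  ((isConcaveQuadratic_hcvF hrT hTmax).existsUnique_root_gt (by simpa using hs)).unique
    ⟨hx, hFx⟩ ⟨hcvT0_pos hs hrT hTmax, hcvF_hcvT0 hs.le hrT hTmax⟩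

end Uninfected

section Equilibrium

variable {s rT rI dT dI Tmax β p q c η ε T I V : ℝ}

local notation "T⁰" => hcvT0 s rT dT Tmax
local notation "𝓐" => hcvA Tmax β p c η ε
local notation "𝓘" => hcvI rI dI Tmax β p q c η ε
local notation "𝓥" => hcvV rI dI Tmax β p q c η ε
local notation "𝓗" => hcvH s rT rI dT dI Tmax β p q c η ε

theorem hcvA_pos (hβ : 0 < β) (hp : 0 < p) (hTmax : 0 < Tmax) (hc : 0 < c) (hη : η < 1)
    (hε : ε < 1) : 0 < 𝓐 :=
  div_pos (mul_pos (mul_pos (mul_pos (mul_pos (sub_pos.2 hε) (sub_pos.2 hη)) hβ) hp) hTmax) hc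

theorem hcvR0_sub_one (hrI : rI ≠ 0) (hTmax : Tmax ≠ 0) (hc : c ≠ 0) (hδ : dI + q ≠ 0) :
    hcvR0 s rT rI dT dI Tmax β p q c η ε - 1 = rI * 𝓘 T⁰ / ((dI + q) * Tmax) := by
  simp only [hcvR0, hcvI, hcvA]
  field_simp
  ring

theorem one_lt_hcvR0_iff (hrI : 0 < rI) (hTmax : 0 < Tmax) (hc : c ≠ 0) (hδ : 0 < dI + q) :
    1 < hcvR0 s rT rI dT dI Tmax β p q c η ε ↔ 0 < 𝓘 T⁰ := by
  rw [← sub_pos, hcvR0_sub_one hrI.ne' hTmax.ne' hc hδ.ne',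
    div_pos_iff_of_pos_right (by positivity), mul_pos_iff_of_pos_left hrI]

theorem hcvI_sub_hcvI (x y : ℝ) : 𝓘 x - 𝓘 y = (𝓐 / rI - 1) * (x - y) := by
  simp only [hcvI]
  ring

theorem exists_hcvI_eq_mul_sub (hm : 𝓐 / rI - 1 ≠ 0) :
    ∃ T₁, ∀ x, 𝓘 x = (𝓐 / rI - 1) * (x - T₁) :=
  ⟨-(Tmax * (1 - (dI + q) / rI)) / (𝓐 / rI - 1), fun x => by simp only [hcvI]; field_simp; ring⟩

theorem hcvH_zero : 𝓗 0 = s + q * 𝓘 0 := by simp [hcvH]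

theorem hcvH_eq_hcvF (hI : 𝓘 T = 0) : 𝓗 T = hcvF s rT dT Tmax T := by
  simp [hcvH, hcvV, hcvF, hI]

theorem isConcaveQuadratic_hcvH (hA : 0 < 𝓐) (hrI : 0 < rI) (hTmax : 0 < Tmax) (hrIT : rI ≤ rT)
    (hc : c ≠ 0) : IsConcaveQuadratic 𝓗 := by
  refine ⟨𝓐 * (rT - rI + 𝓐) / (rI * Tmax),
    rT - dT + q * (𝓐 / rI - 1) - (rT + 𝓐) * (1 - (dI + q) / rI),
    s + q * Tmax * (1 - (dI + q) / rI), ?_, fun x => ?_⟩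
  · have := sub_nonneg.2 hrIT
    positivity
  · simp only [hcvH, hcvV, hcvI, hcvA]
    field_simp
    ring

theorem hcvEquil_iff (hI : I ≠ 0) (hrI : rI ≠ 0) (hTmax : Tmax ≠ 0) (hc : c ≠ 0) :
    hcvEquil s rT rI dT dI Tmax β p q c η ε T I V ↔ I = 𝓘 T ∧ V = 𝓥 T ∧ 𝓗 T = 0 := by
  constructor
  · rintro ⟨hT', hI', hV'⟩
    have hV : V = (1 - ε) * p * I / c := by
      field_simp
      linear_combination -hV'
    subst hV
    have hA : 𝓐 / Tmax = (1 - η) * β * (1 - ε) * p / c := by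
      simp only [hcvA]
      field_simp
    have hline : I * (rI * (1 - (T + I) / Tmax) + 𝓐 / Tmax * T - (dI + q)) = 0 := by
      rw [hA]
      linear_combination hI'
    have hIT : I = 𝓘 T := by
      have := (mul_eq_zero.1 hline).resolve_left hI
      simp only [hcvI]
      field_simp at this ⊢
      linear_combination -this
    subst hIT
    exact ⟨rfl, rfl, hT'⟩
  · rintro ⟨rfl, rfl, hH⟩
    refine ⟨hH, ?_, ?_⟩
    · simp only [hcvV, hcvI, hcvA]
      field_simp
      ring
    · simp only [hcvV]
      field_simp
      ring

theorem hcvEquil.total_rate_eq_zero (h : hcvEquil s rT rI dT dI Tmax β p q c η ε T I V) :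
    s + (rT * T + rI * I) * (1 - (T + I) / Tmax) - dT * T - dI * I = 0 := by
  obtain ⟨hT', hI', -⟩ := h
  linear_combination hT' + hI'

theorem hcvEquil.add_le_Tmax (h : hcvEquil s rT rI dT dI Tmax β p q c η ε T I V) (hT : 0 ≤ T)
    (hI : 0 ≤ I) (hrT : 0 ≤ rT) (hrI : 0 ≤ rI) (hdT : 0 < dT) (hTmax : 0 < Tmax)
    (hsT : s ≤ dT * Tmax) (hdTI : dT ≤ dI) : T + I ≤ Tmax := by
  by_contra! hN
  have hcrowded : 1 - (T + I) / Tmax < 0 := by rwa [sub_neg, one_lt_div hTmax]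
  have := h.total_rate_eq_zero
  nlinarith [mul_nonpos_of_nonneg_of_nonpos (by positivity : 0 ≤ rT * T + rI * I) hcrowded.le,
    mul_le_mul_of_nonneg_right hdTI hI, mul_lt_mul_of_pos_left hN hdT]

theorem hcvEquil.add_le_hcvT0 (h : hcvEquil s rT rI dT dI Tmax β p q c η ε T I V) (hT : 0 ≤ T)
    (hI : 0 ≤ I) (hs : 0 < s) (hrT : 0 < rT) (hrI : 0 ≤ rI) (hdT : 0 < dT) (hTmax : 0 < Tmax)
    (hrIT : rI ≤ rT) (hsT : s ≤ dT * Tmax) (hdTI : dT ≤ dI) : T + I ≤ T⁰ := by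
  have hN := h.add_le_Tmax hT hI hrT.le hrI hdT hTmax hsT hdTI
  refine le_hcvT0_of_hcvF_nonneg hs hrT hTmax ?_
  have hF : hcvF s rT dT Tmax (T + I) = (rT - rI) * I * (1 - (T + I) / Tmax) + (dI - dT) * I := by
    simp only [hcvF]
    linear_combination h.total_rate_eq_zero
  have : 0 ≤ 1 - (T + I) / Tmax := by rwa [sub_nonneg, div_le_one hTmax]
  have := sub_nonneg.2 hrIT
  have := sub_nonneg.2 hdTI
  rw [hF]
  positivity

theorem hcvEquil.hcvI_hcvT0_pos (h : hcvEquil s rT rI dT dI Tmax β p q c η ε T I V) (hT : 0 < T)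
    (hI : 0 < I) (hs : 0 < s) (hrT : 0 < rT) (hrI : 0 < rI) (hdT : 0 < dT) (hTmax : 0 < Tmax)
    (hq : 0 ≤ q) (hc : c ≠ 0) (hA : 0 < 𝓐) (hrIT : rI ≤ rT) (hsT : s ≤ dT * Tmax)
    (hdTI : dT ≤ dI) : 0 < 𝓘 T⁰ := by
  have hTT0 : T < T⁰ := by
    linarith [h.add_le_hcvT0 hT.le hI.le hs hrT hrI.le hdT hTmax hrIT hsT hdTI]
  obtain ⟨rfl, -, hH⟩ := (hcvEquil_iff hI.ne' hrI.ne' hTmax.ne' hc).1 h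
  by_contra! hT0
  have hdiff : 𝓘 T - 𝓘 T⁰ = (𝓐 / rI - 1) * (T - T⁰) := hcvI_sub_hcvI _ _
  have hm : 𝓐 / rI - 1 < 0 := by nlinarith
  obtain ⟨T₁, hT₁⟩ := exists_hcvI_eq_mul_sub hm.ne
  rw [hT₁] at hI hT0
  have hTT₁ : T < T₁ := by nlinarith
  have hT₁T0 : T₁ ≤ T⁰ := by nlinarith
  have hH0 : 0 < 𝓗 0 := by
    rw [hcvH_zero, hT₁]
    have := mul_nonneg hq (mul_nonneg_of_nonpos_of_nonpos hm.le (by linarith : 0 - T₁ ≤ 0))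
    linarith
  have hHT₁ : 0 ≤ 𝓗 T₁ := by
    rw [hcvH_eq_hcvF (by simp [hT₁])]
    exact hcvF_nonneg hs hrT hTmax (hT.trans hTT₁) hT₁T0
  exact ((isConcaveQuadratic_hcvH hA hrI hTmax hrIT hc).pos_of_mem_Ioo hH0 hHT₁ ⟨hT, hTT₁⟩).ne' hH

theorem hcvEquil.eq_uninfected (h : hcvEquil s rT rI dT dI Tmax β p q c η ε T I V) (hT : 0 < T)
    (hI : 0 ≤ I) (hT0 : 𝓘 T⁰ ≤ 0) (hs : 0 < s) (hrT : 0 < rT) (hrI : 0 < rI) (hdT : 0 < dT)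
    (hTmax : 0 < Tmax) (hq : 0 ≤ q) (hc : 0 < c) (hA : 0 < 𝓐) (hrIT : rI ≤ rT)
    (hsT : s ≤ dT * Tmax) (hdTI : dT ≤ dI) : T = T⁰ ∧ I = 0 ∧ V = 0 := by
  obtain rfl | hI := hI.eq_or_lt
  · obtain ⟨hT', -, hV'⟩ := h
    obtain rfl : V = 0 := by simpa [hc.ne'] using hV'
    refine ⟨eq_hcvT0_of_hcvF_eq_zero hs hrT hTmax hT ?_, rfl, rfl⟩
    simpa [hcvF] using hT'
  · exact absurd (h.hcvI_hcvT0_pos hT hI hs hrT hrI hdT hTmax hq hc.ne' hA hrIT hsT hdTI) hT0.not_gt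

theorem existsUnique_hcvH_eq_zero_of_hcvI_zero_nonneg (h0 : 0 ≤ 𝓘 0) (hT0 : 0 < 𝓘 T⁰)
    (hs : 0 < s) (hrT : 0 < rT) (hrI : 0 < rI) (hTmax : 0 < Tmax) (hq : 0 ≤ q) (hc : c ≠ 0)
    (hA : 0 < 𝓐) (hrIT : rI ≤ rT) :
    ∃! T, 0 < T ∧ 0 < 𝓘 T ∧ 𝓗 T = 0 := by
  have hH : IsConcaveQuadratic 𝓗 := isConcaveQuadratic_hcvH hA hrI hTmax hrIT hc
  have hH0 : 0 < 𝓗 0 := by rw [hcvH_zero]; positivity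
  obtain ⟨R, ⟨hR, hHR⟩, huniq⟩ := hH.existsUnique_root_gt hH0
  refine ⟨R, ⟨hR, ?_, hHR⟩, fun x hx => huniq x ⟨hx.1, hx.2.2⟩⟩
  have hR0 : 𝓘 R - 𝓘 0 = (𝓐 / rI - 1) * (R - 0) := hcvI_sub_hcvI _ _
  have hT00 : 𝓘 T⁰ - 𝓘 0 = (𝓐 / rI - 1) * (T⁰ - 0) := hcvI_sub_hcvI _ _
  have hT0pos := hcvT0_pos hs hrT hTmax (dT := dT)
  rcases le_or_gt 0 (𝓐 / rI - 1) with hm | hm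
  · rcases h0.eq_or_lt with h0 | h0
    · have hm : 0 < 𝓐 / rI - 1 := by nlinarith
      nlinarith [mul_pos hm hR]
    · nlinarith [mul_nonneg hm hR.le]
  · obtain ⟨T₁, hT₁⟩ := exists_hcvI_eq_mul_sub hm.ne
    have hT0T₁ : T⁰ < T₁ := by rw [hT₁] at hT0; nlinarith
    have hHT₁ : 𝓗 T₁ < 0 := by
      rw [hcvH_eq_hcvF (by simp [hT₁])]
      exact hcvF_neg hs hrT hTmax hT0T₁
    have hRT₁ : R < T₁ := by
      by_contra! hT₁R
      exact (hH.pos_of_mem_Ioo hH0 hHR.ge ⟨hT0pos.trans hT0T₁,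
        hT₁R.lt_of_ne fun h => by simp [h, hHR] at hHT₁⟩).not_gt hHT₁
    rw [hT₁]
    nlinarith

theorem existsUnique_hcvH_eq_zero_of_hcvI_zero_neg (h0 : 𝓘 0 < 0) (hT0 : 0 < 𝓘 T⁰)
    (hs : 0 < s) (hrT : 0 < rT) (hrI : 0 < rI) (hTmax : 0 < Tmax) (hc : c ≠ 0)
    (hA : 0 < 𝓐) (hrIT : rI ≤ rT) :
    ∃! T, 0 < T ∧ 0 < 𝓘 T ∧ 𝓗 T = 0 := by
  have hT0pos := hcvT0_pos hs hrT hTmax (dT := dT)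
  have hT00 : 𝓘 T⁰ - 𝓘 0 = (𝓐 / rI - 1) * (T⁰ - 0) := hcvI_sub_hcvI _ _
  have hm : 0 < 𝓐 / rI - 1 := by nlinarith
  obtain ⟨T₁, hT₁⟩ := exists_hcvI_eq_mul_sub hm.ne'
  have hI_pos : ∀ x, 0 < 𝓘 x ↔ T₁ < x := fun x => by
    rw [hT₁, mul_pos_iff_of_pos_left hm, sub_pos]
  have hT₁0 : 0 < T₁ := by rw [hT₁] at h0; nlinarith
  have hHT₁ : 0 < 𝓗 T₁ := by
    rw [hcvH_eq_hcvF (by simp [hT₁])]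
    exact hcvF_pos hs hrT hTmax hT₁0 ((hI_pos _).1 hT0)
  obtain ⟨R, ⟨hR, hHR⟩, huniq⟩ :=
    (isConcaveQuadratic_hcvH hA hrI hTmax hrIT hc).existsUnique_root_gt hHT₁
  exact ⟨R, ⟨hT₁0.trans hR, (hI_pos R).2 hR, hHR⟩,
    fun x hx => huniq x ⟨(hI_pos x).1 hx.2.1, hx.2.2⟩⟩

theorem existsUnique_pos_hcvEquil (hT0 : 0 < 𝓘 T⁰) (hs : 0 < s) (hrT : 0 < rT) (hrI : 0 < rI)
    (hTmax : 0 < Tmax) (hp : 0 < p) (hq : 0 ≤ q) (hc : 0 < c) (hε : ε < 1) (hA : 0 < 𝓐)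
    (hrIT : rI ≤ rT) :
    ∃ T, (0 < T ∧ 0 < 𝓘 T ∧ 0 < 𝓥 T ∧ hcvEquil s rT rI dT dI Tmax β p q c η ε T (𝓘 T) (𝓥 T)) ∧
      ∀ T' I' V', 0 < T' → 0 < I' → hcvEquil s rT rI dT dI Tmax β p q c η ε T' I' V' →
        T' = T ∧ I' = 𝓘 T ∧ V' = 𝓥 T := by
  obtain ⟨T, ⟨hT, hI, hH⟩, huniq⟩ : ∃! T, 0 < T ∧ 0 < 𝓘 T ∧ 𝓗 T = 0 := by
    rcases le_or_gt 0 (𝓘 0) with h0 | h0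
    · exact existsUnique_hcvH_eq_zero_of_hcvI_zero_nonneg h0 hT0 hs hrT hrI hTmax hq hc.ne' hA hrIT
    · exact existsUnique_hcvH_eq_zero_of_hcvI_zero_neg h0 hT0 hs hrT hrI hTmax hc.ne' hA hrIT
  have hV : 0 < 𝓥 T := div_pos (mul_pos (mul_pos (sub_pos.2 hε) hp) hI) hc
  refine ⟨T, ⟨hT, hI, hV, (hcvEquil_iff hI.ne' hrI.ne' hTmax.ne' hc.ne').2 ⟨rfl, rfl, hH⟩⟩, ?_⟩
  intro T' I' V' hT' hI' h
  obtain ⟨rfl, rfl, hH'⟩ := (hcvEquil_iff hI'.ne' hrI.ne' hTmax.ne' hc.ne').1 h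
  obtain rfl := huniq T' ⟨hT', hI', hH'⟩
  exact ⟨rfl, rfl, rfl⟩

end Equilibrium

/-- The HCV system has a (unique) positive infected equilibrium iff `R₀ > 1`;
when `R₀ ≤ 1` the only nonnegative equilibrium is the uninfected one. -/
theorem hcv_infected_equilibrium_existence
    (s rT rI dT dI Tmax β p q c η ε : ℝ)
    (hs : 0 < s) (hrT : 0 < rT) (hrI : 0 < rI) (hdT : 0 < dT) (hdI : 0 < dI)
    (hTmax : 0 < Tmax) (hβ : 0 < β) (hp : 0 < p) (hq : 0 < q) (hc : 0 < c)
    (hη : η ∈ Set.Ico (0 : ℝ) 1) (hε : ε ∈ Set.Ico (0 : ℝ) 1)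
    (hrIT : rI ≤ rT) (hsT : s ≤ dT * Tmax) (hdTI : dT ≤ dI) :
    ((∃ Ts Is Vs : ℝ, 0 < Ts ∧ 0 < Is ∧ 0 < Vs ∧
        hcvEquil s rT rI dT dI Tmax β p q c η ε Ts Is Vs) ↔
      1 < hcvR0 s rT rI dT dI Tmax β p q c η ε) ∧
    (1 < hcvR0 s rT rI dT dI Tmax β p q c η ε →
      ∃ Ts Is Vs : ℝ,
        (0 < Ts ∧ 0 < Is ∧ 0 < Vs ∧
          hcvEquil s rT rI dT dI Tmax β p q c η ε Ts Is Vs) ∧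
        Is = ((1 - ε) * (1 - η) * β * p * Tmax / c / rI - 1) * Ts
              + Tmax * (1 - (dI + q) / rI) ∧
        Vs = (1 - ε) * p * Is / c ∧
        (∀ Ts' Is' Vs' : ℝ, 0 < Ts' → 0 < Is' → 0 < Vs' →
          hcvEquil s rT rI dT dI Tmax β p q c η ε Ts' Is' Vs' →
          Ts' = Ts ∧ Is' = Is ∧ Vs' = Vs)) ∧
    (hcvR0 s rT rI dT dI Tmax β p q c η ε ≤ 1 →
      ∀ Ts Is Vs : ℝ, 0 < Ts → 0 ≤ Is → 0 ≤ Vs →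
        hcvEquil s rT rI dT dI Tmax β p q c η ε Ts Is Vs →
        Ts = hcvT0 s rT dT Tmax ∧ Is = 0 ∧ Vs = 0) := by
  have hA := hcvA_pos hβ hp hTmax hc hη.2 hε.2
  have hR0 : 1 < hcvR0 s rT rI dT dI Tmax β p q c η ε ↔ _ :=
    one_lt_hcvR0_iff hrI hTmax hc.ne' (add_pos hdI hq)
  refine ⟨⟨fun ⟨T, I, V, hT, hI, _, h⟩ => ?_, fun h => ?_⟩, fun h => ?_,
    fun h T I V hT hI _ hE => ?_⟩
  · exact hR0.2 (h.hcvI_hcvT0_pos hT hI hs hrT hrI hdT hTmax hq.le hc.ne' hA hrIT hsT hdTI)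
  · obtain ⟨T, hT, -⟩ :=
      existsUnique_pos_hcvEquil (hR0.1 h) hs hrT hrI hTmax hp hq.le hc hε.2 hA hrIT
    exact ⟨T, _, _, hT⟩
  · obtain ⟨T, hT, huniq⟩ :=
      existsUnique_pos_hcvEquil (hR0.1 h) hs hrT hrI hTmax hp hq.le hc hε.2 hA hrIT
    exact ⟨T, _, _, hT, rfl, rfl, fun T' I' V' hT' hI' _ => huniq T' I' V' hT' hI'⟩
  · exact hE.eq_uninfected hT hI (not_lt.1 (mt hR0.2 h.not_gt)) hs hrT hrI hdT hTmax hq.le hc hA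
      hrIT hsT hdTI
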